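/- arXiv:2402.19324 — 2 statements merged into one kernel-verified Lean document; each statement's English description precedes it below -/
import Mathlib

section
/- There exists a constant C > 0 such that for all n ≥ 1, the number |P_2(n)| of compositions of n into powers of 2 satisfies |P_2(n)| ≤ C · B^n, where B = 1/|x0| ≈ 1.80193 and x0 ≈ 0.55496 is the root of smallest absolute value of the polynomial x³ − 2x² − x + 1. -/
/-! Let `c n` count the compositions of `n` with parts in `S`. Splitting off the first part gives
`c n ≤ ∑ c (n - a)` over the parts `a ≤ n`, so `c n ≤ x⁻¹ ^ n` by induction as soon as every finite
set of parts has `∑ x ^ a ≤ 1`. For parts in `{1} ∪ 2ℕ₊` that sum is at most `x + x² / (1 - x²)`,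
which is `1` when `x³ - 2x² - x + 1 = 0`. The cubic has a root in `[1/2, 3/5]` and none in
`[-3/5, 0]`, so its root of smallest modulus lies in `(0, 1)`. -/

/-- Compositions of `n` (ordered tuples of positive integers summing to `n`,
encoded as lists) all of whose parts lie in `{1} ∪ {p^k : k ≥ 1}`. -/
def compPow (p n : ℕ) : Set (List ℕ) :=
  {l | l.sum = n ∧ ∀ a ∈ l, a = 1 ∨ ∃ k, 1 ≤ k ∧ a = p ^ k}

/-- The set `{p^k − 1 : k ≥ 1}`. -/
def partsPm1 (p : ℕ) : Set ℕ := {a | ∃ k, 1 ≤ k ∧ a = p ^ k - 1}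

/-- Compositions of `n` whose parts alternate between `{p1^k − 1 : k ≥ 1}` and
`{p2^k − 1 : k ≥ 1}` (starting with either set). -/
def altComp (p1 p2 n : ℕ) : Set (List ℕ) :=
  {l | l.sum = n ∧
    ((∀ t, t < l.length →
        (t % 2 = 0 → l.getD t 0 ∈ partsPm1 p1) ∧ (t % 2 = 1 → l.getD t 0 ∈ partsPm1 p2)) ∨
     (∀ t, t < l.length →
        (t % 2 = 0 → l.getD t 0 ∈ partsPm1 p2) ∧ (t % 2 = 1 → l.getD t 0 ∈ partsPm1 p1)))}

/-- Compositions of `n` all of whose parts lie in `{1, 2} ∪ {2k : k ≥ 2}`. -/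
def compA (n : ℕ) : Set (List ℕ) :=
  {l | l.sum = n ∧ ∀ a ∈ l, a = 1 ∨ a = 2 ∨ ∃ k, 2 ≤ k ∧ a = 2 * k}

def compositionsWith (S : Set ℕ) (n : ℕ) : Set (List ℕ) :=
  {l | l.sum = n ∧ ∀ a ∈ l, a ∈ S}

section compositionsWith

variable {S : Set ℕ}

theorem compositionsWith_finite (hS : 0 ∉ S) (n : ℕ) : (compositionsWith S n).Finite := by
  let toComposition : compositionsWith S n → Composition n := fun l =>
    ⟨l.1, fun ha => Nat.pos_of_ne_zero fun h0 => hS (h0 ▸ l.2.2 _ ha), l.2.1⟩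
  refine Set.finite_coe_iff.mp (Finite.of_injective toComposition fun l l' h => ?_)
  exact Subtype.ext (congrArg Composition.blocks h)

theorem compositionsWith_zero_subset (hS : 0 ∉ S) : compositionsWith S 0 ⊆ {[]} := by
  rintro (_ | ⟨a, l⟩) ⟨hsum, hparts⟩
  · rfl
  · have ha : a = 0 := (List.sum_eq_zero_iff.mp hsum) a List.mem_cons_self
    exact absurd (ha ▸ hparts a List.mem_cons_self) hS

theorem compositionsWith_subset_biUnion {n : ℕ} (hn : n ≠ 0) (T : Finset ℕ)
    (hT : ∀ a ∈ S, a ≤ n → a ∈ T) :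
    compositionsWith S n ⊆ ⋃ a ∈ T, List.cons a '' compositionsWith S (n - a) := by
  rintro (_ | ⟨a, l⟩) ⟨hsum, hparts⟩
  · exact absurd hsum.symm hn
  · rw [List.sum_cons] at hsum
    have hl : l ∈ compositionsWith S (n - a) :=
      ⟨by omega, fun b hb => hparts b (List.mem_cons_of_mem a hb)⟩
    exact Set.mem_biUnion (hT a (hparts a List.mem_cons_self) (by omega)) ⟨l, hl, rfl⟩

theorem ncard_compositionsWith_le (hS : 0 ∉ S) {x : ℝ} (hx : 0 < x)
    (hsum : ∀ T : Finset ℕ, ↑T ⊆ S → ∑ a ∈ T, x ^ a ≤ 1) (n : ℕ) :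
    ((compositionsWith S n).ncard : ℝ) ≤ x⁻¹ ^ n := by
  induction n using Nat.strong_induction_on with
  | _ n ih =>
  rcases eq_or_ne n 0 with rfl | hn
  · calc ((compositionsWith S 0).ncard : ℝ) ≤ ({[]} : Set (List ℕ)).ncard := by
          exact_mod_cast Set.ncard_le_ncard (compositionsWith_zero_subset hS) (Set.finite_singleton _)
      _ = x⁻¹ ^ 0 := by simp
  set T := ((Set.finite_Icc 1 n).inter_of_right S).toFinset
  have hmemT : ∀ {a}, a ∈ T ↔ a ∈ S ∧ 1 ≤ a ∧ a ≤ n := by simp [T]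
  have hcover := compositionsWith_subset_biUnion hn T fun a ha han =>
    hmemT.2 ⟨ha, Nat.one_le_iff_ne_zero.2 (ne_of_mem_of_not_mem ha hS), han⟩
  have hfin : (⋃ a ∈ T, List.cons a '' compositionsWith S (n - a)).Finite :=
    T.finite_toSet.biUnion fun a _ => (compositionsWith_finite hS _).image _
  calc ((compositionsWith S n).ncard : ℝ)
      ≤ ∑ a ∈ T, ((compositionsWith S (n - a)).ncard : ℝ) := by
        refine mod_cast (Set.ncard_le_ncard hcover hfin).trans
          ((T.set_ncard_biUnion_le _).trans_eq (Finset.sum_congr rfl fun a _ => ?_))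
        exact Set.ncard_image_of_injective _ List.cons_injective
    _ ≤ ∑ a ∈ T, x⁻¹ ^ n * x ^ a := by
        refine Finset.sum_le_sum fun a ha => ?_
        obtain ⟨-, ha1, han⟩ := hmemT.1 ha
        rw [← inv_inv (x ^ a), ← inv_pow, ← pow_sub₀ _ (inv_ne_zero hx.ne') han]
        exact ih (n - a) (by omega)
    _ = x⁻¹ ^ n * ∑ a ∈ T, x ^ a := (Finset.mul_sum _ _ _).symm
    _ ≤ x⁻¹ ^ n := mul_le_of_le_one_right (by positivity) (hsum T fun a ha => (hmemT.1 ha).1)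

end compositionsWith

theorem sum_pow_le_of_forall_eq_one_or_even {x : ℝ} (hx0 : 0 ≤ x) (hx1 : x < 1) (T : Finset ℕ)
    (hT : ∀ a ∈ T, a = 1 ∨ ∃ j, 1 ≤ j ∧ a = 2 * j) :
    ∑ a ∈ T, x ^ a ≤ x + x ^ 2 / (1 - x ^ 2) := by
  set J := Finset.Ico 1 (T.sup id + 1)
  have hsub : T ⊆ insert 1 (J.image (2 * ·)) := by
    intro a ha
    rcases hT a ha with rfl | ⟨j, hj, rfl⟩
    · exact Finset.mem_insert_self _ _
    · have : 2 * j ≤ T.sup id := Finset.le_sup (f := id) ha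
      exact Finset.mem_insert_of_mem (Finset.mem_image_of_mem _ (Finset.mem_Ico.2 ⟨hj, by omega⟩))
  have hone : 1 ∉ J.image (2 * ·) := by
    simp only [Finset.mem_image, not_exists, not_and]
    omega
  calc ∑ a ∈ T, x ^ a ≤ ∑ a ∈ insert 1 (J.image (2 * ·)), x ^ a :=
        Finset.sum_le_sum_of_subset_of_nonneg hsub fun _ _ _ => by positivity
    _ = x + ∑ j ∈ J, (x ^ 2) ^ j := by
        rw [Finset.sum_insert hone, Finset.sum_image fun _ _ _ _ h => by omega, pow_one]
        simp only [pow_mul]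
    _ ≤ x + x ^ 2 / (1 - x ^ 2) := by
        grw [geom_sum_Ico_le_of_lt_one (sq_nonneg x) (by nlinarith), pow_one]

theorem compPow_eq_compositionsWith (p n : ℕ) :
    compPow p n = compositionsWith {a | a = 1 ∨ ∃ k, 1 ≤ k ∧ a = p ^ k} n :=
  rfl

theorem smallest_root_mem_Ioo {x0 : ℝ} (hroot : x0 ^ 3 - 2 * x0 ^ 2 - x0 + 1 = 0)
    (hmin : ∀ y : ℝ, y ^ 3 - 2 * y ^ 2 - y + 1 = 0 → |x0| ≤ |y|) : x0 ∈ Set.Ioo 0 1 := by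
  obtain ⟨r, ⟨hr_lo, hr_hi⟩, hr⟩ : ∃ r ∈ Set.Icc (1 / 2 : ℝ) (3 / 5), r ^ 3 - 2 * r ^ 2 - r + 1 = 0 :=
    intermediate_value_Icc' (by norm_num) (by fun_prop) (by norm_num)
  have habs : |x0| ≤ 3 / 5 := (hmin r hr).trans (by rwa [abs_of_nonneg (by linarith)])
  obtain ⟨hlo, hhi⟩ := abs_le.1 habs
  refine ⟨?_, by linarith⟩
  by_contra! hnonpos
  nlinarith [mul_nonneg (neg_nonneg.2 hnonpos) (sq_nonneg x0)]

/-- `|P_2(n)| = O(B^n)` where `B = 1/|x0|` and `x0` is the root of `x³ − 2x² − x + 1`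
of smallest absolute value. -/
theorem compPow_two_card_isBigO (x0 : ℝ)
    (hroot : x0 ^ 3 - 2 * x0 ^ 2 - x0 + 1 = 0)
    (hmin : ∀ y : ℝ, y ^ 3 - 2 * y ^ 2 - y + 1 = 0 → |x0| ≤ |y|) :
    ∃ C : ℝ, 0 < C ∧ ∀ n : ℕ, 1 ≤ n →
      (Nat.card (compPow 2 n) : ℝ) ≤ C * (1 / |x0|) ^ n := by
  obtain ⟨hpos, hlt⟩ := smallest_root_mem_Ioo hroot hmin
  have hweight : x0 + x0 ^ 2 / (1 - x0 ^ 2) = 1 := by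
    have : 1 - x0 ^ 2 ≠ 0 := by nlinarith
    field_simp
    linarith
  have hparts : ∀ a ∈ {a | a = 1 ∨ ∃ k, 1 ≤ k ∧ a = 2 ^ k}, a = 1 ∨ ∃ j, 1 ≤ j ∧ a = 2 * j := by
    rintro a (rfl | ⟨k, hk, rfl⟩)
    · exact .inl rfl
    · exact .inr ⟨2 ^ (k - 1), Nat.one_le_two_pow, by rw [← pow_succ', Nat.sub_add_cancel hk]⟩
  refine ⟨1, one_pos, fun n _ => ?_⟩
  rw [abs_of_pos hpos, one_mul, one_div, Nat.card_coe_set_eq, compPow_eq_compositionsWith]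
  refine ncard_compositionsWith_le (fun h0 => ?_) hpos (fun T hT => ?_) n
  · rcases hparts 0 h0 with h | ⟨j, hj, h⟩ <;> omega
  · exact hweight ▸ sum_pow_le_of_forall_eq_one_or_even hpos.le hlt T fun a ha => hparts a (hT ha)
end

section
/- For all integers p1, p2 ≥ 2 and every m ≥ 0, one has 1 + Σ_{k=1}^{m} |P_{p1,p2}(k)| ≤ Σ_{k=1}^{m+1} B^k, where B = 1/|x0| ≈ 1.80193 and x0 ≈ 0.55496 is the root of smallest absolute value of the polynomial x³ − 2x² − x + 1. (The left-hand side equals the cardinality |Δ_m^{(1,1)}| of the multiplicative dependency set of the root of the 2-tree with respect to the constraints p1, p2.) -/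
namespace List

variable {α : Type*}

def Alternates (A B : Set α) : List α → Prop
  | [] => True
  | a :: l => a ∈ A ∧ l.Alternates B A

theorem alternates_iff_getD (A B : Set α) (l : List α) (d : α) :
    l.Alternates A B ↔ ∀ t < l.length,
      (t % 2 = 0 → l.getD t d ∈ A) ∧ (t % 2 = 1 → l.getD t d ∈ B) := by
  induction l generalizing A B with
  | nil => simp [Alternates]
  | cons a l ih =>
    rw [Alternates, ih, length_cons, Nat.forall_lt_succ_left]
    simp only [getD_cons_zero, getD_cons_succ, Nat.zero_mod, Nat.succ_mod_two_eq_zero_iff,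
      Nat.succ_mod_two_eq_one_iff]
    exact and_congr (by simp) (forall₂_congr fun _ _ => and_comm)

theorem Alternates.mem_union {A B : Set α} {l : List α} (hl : l.Alternates A B) {a : α}
    (ha : a ∈ l) : a ∈ A ∪ B := by
  induction l generalizing A B with
  | nil => simp at ha
  | cons b l ih =>
    rcases mem_cons.1 ha with rfl | ha
    · exact Or.inl hl.1
    · exact Set.union_comm B A ▸ ih hl.2 ha

end List

def altCompositions (A B : Set ℕ) (n : ℕ) : Set (List ℕ) :=
  {l | l.sum = n ∧ l.Alternates A B}

theorem altComp_eq_union (p1 p2 n : ℕ) :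
    altComp p1 p2 n = altCompositions (partsPm1 p1) (partsPm1 p2) n ∪
      altCompositions (partsPm1 p2) (partsPm1 p1) n := by
  ext l
  simp only [altComp, altCompositions, List.alternates_iff_getD _ _ l 0, Set.mem_union,
    Set.mem_ofPred_eq, and_or_left]

section altCompositions

variable {A B : Set ℕ}

theorem finite_altCompositions (hA : 0 ∉ A) (hB : 0 ∉ B) (n : ℕ) :
    (altCompositions A B n).Finite := by
  refine (Set.finite_range (Composition.blocks : Composition n → List ℕ)).subset ?_
  rintro l ⟨hsum, halt⟩
  refine ⟨⟨l, fun ha => Nat.pos_of_ne_zero ?_, hsum⟩, rfl⟩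
  rintro rfl
  exact (halt.mem_union ha).elim hA hB

theorem altCompositions_zero (hA : 0 ∉ A) : altCompositions A B 0 = {[]} := by
  ext l
  cases l with
  | nil => simp [altCompositions, List.Alternates]
  | cons a l =>
    simp only [altCompositions, List.sum_cons, Nat.add_eq_zero_iff, List.Alternates,
      Set.mem_ofPred_eq, Set.mem_singleton_iff, reduceCtorEq, iff_false, not_and]
    rintro ⟨rfl, -⟩ h
    exact absurd h hA

theorem altCompositions_subset_biUnion {n : ℕ} (hn : n ≠ 0) :
    altCompositions A B n ⊆
      ⋃ a ∈ {a ∈ A | a ≤ n}, List.cons a '' altCompositions B A (n - a) := by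
  rintro (_ | ⟨a, l⟩) ⟨hsum, halt⟩
  · exact absurd hsum.symm hn
  · rw [List.sum_cons] at hsum
    exact Set.mem_biUnion ⟨halt.1, by omega⟩ ⟨l, ⟨by omega, halt.2⟩, rfl⟩

theorem ncard_altCompositions_le {c : ℝ} (hc : 0 < c) (hA : 0 ∉ A) (hB : 0 ∉ B)
    (hAc : ∀ s : Finset ℕ, ↑s ⊆ A → ∑ a ∈ s, (c ^ a)⁻¹ ≤ 1)
    (hBc : ∀ s : Finset ℕ, ↑s ⊆ B → ∑ b ∈ s, (c ^ b)⁻¹ ≤ 1) (n : ℕ) :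
    ((altCompositions A B n).ncard : ℝ) ≤ c ^ n := by
  induction n using Nat.strong_induction_on generalizing A B with
  | _ n ih =>
  rcases eq_or_ne n 0 with rfl | hn
  · simp [altCompositions_zero hA]
  have hfin : {a ∈ A | a ≤ n}.Finite := (Set.finite_Iic n).subset fun a ha => ha.2
  have hsub := altCompositions_subset_biUnion (A := A) (B := B) hn
  rw [← hfin.coe_toFinset] at hsub
  have hcard : (altCompositions A B n).ncard ≤
      ∑ a ∈ hfin.toFinset, (altCompositions B A (n - a)).ncard :=
    calc (altCompositions A B n).ncard
        ≤ (⋃ a ∈ hfin.toFinset, List.cons a '' altCompositions B A (n - a)).ncard :=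
          Set.ncard_le_ncard hsub <| hfin.toFinset.finite_toSet.biUnion fun _ _ =>
            (finite_altCompositions hB hA _).image _
      _ ≤ ∑ a ∈ hfin.toFinset, (List.cons a '' altCompositions B A (n - a)).ncard :=
          Finset.set_ncard_biUnion_le _ _
      _ = _ := Finset.sum_congr rfl fun _ _ =>
          Set.ncard_image_of_injective _ List.cons_injective
  calc ((altCompositions A B n).ncard : ℝ)
      ≤ ∑ a ∈ hfin.toFinset, ((altCompositions B A (n - a)).ncard : ℝ) := by
        exact_mod_cast hcard
    _ ≤ ∑ a ∈ hfin.toFinset, c ^ n * (c ^ a)⁻¹ := by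
        refine Finset.sum_le_sum fun a ha => ?_
        obtain ⟨haA, han⟩ := hfin.mem_toFinset.1 ha
        have ha0 : a ≠ 0 := ne_of_mem_of_not_mem haA hA
        rw [← pow_sub₀ c hc.ne' han]
        exact ih _ (by omega) hB hA hBc hAc
    _ ≤ c ^ n := by
        rw [← Finset.mul_sum]
        exact mul_le_of_le_one_right (by positivity) (hAc _ (by simp [Set.sep_subset]))

end altCompositions

open Finset in
theorem sum_range_five_eighths_pow_two_pow_sub_one_le (N : ℕ) :
    ∑ k ∈ range N, (5 / 8 : ℝ) ^ (2 ^ (k + 1) - 1) ≤ 1 := by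
  set x : ℝ := 5 / 8
  calc ∑ k ∈ range N, x ^ (2 ^ (k + 1) - 1)
      ≤ ∑ k ∈ range (N + 1), x ^ (2 ^ (k + 1) - 1) :=
        sum_le_sum_of_subset_of_nonneg (range_subset_range.2 N.le_succ) fun _ _ _ => by positivity
    _ = ∑ k ∈ range N, x ^ (2 ^ (k + 2) - 1) + x := by simp [sum_range_succ']
    _ ≤ ∑ k ∈ range N, x ^ 3 * (x ^ 4) ^ k + x := by
        gcongr with k
        rw [← pow_mul, ← pow_add]
        refine pow_le_pow_of_le_one (by positivity) (by norm_num) ?_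
        have := k.lt_two_pow_self
        rw [pow_add]
        omega
    _ ≤ x ^ 3 / (1 - x ^ 4) + x := by
        rw [← mul_sum, div_eq_mul_inv]
        gcongr
        simpa using geom_sum_Ico_le_of_lt_one (m := 0) (n := N) (x := x ^ 4) (by positivity)
          (by norm_num)
    _ ≤ 1 := by norm_num [x]

theorem sum_inv_pow_le_one_of_subset_partsPm1 {p : ℕ} (hp : 2 ≤ p) (s : Finset ℕ)
    (hs : ↑s ⊆ partsPm1 p) : ∑ a ∈ s, ((8 / 5 : ℝ) ^ a)⁻¹ ≤ 1 := by
  set M := s.sup id + 1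
  have hsub : s ⊆ (Finset.range M).image fun k => p ^ (k + 1) - 1 := by
    intro a ha
    obtain ⟨k, hk, rfl⟩ := hs ha
    have hkp : k < p ^ k := k.lt_two_pow_self.trans_le (Nat.pow_le_pow_left hp k)
    have hle : p ^ k - 1 ≤ s.sup id := Finset.le_sup (f := id) ha
    exact Finset.mem_image.2
      ⟨k - 1, Finset.mem_range.2 (by omega), by rw [Nat.sub_add_cancel hk]⟩
  calc ∑ a ∈ s, ((8 / 5 : ℝ) ^ a)⁻¹
      ≤ ∑ a ∈ (Finset.range M).image (fun k => p ^ (k + 1) - 1), ((8 / 5 : ℝ) ^ a)⁻¹ :=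
        Finset.sum_le_sum_of_subset_of_nonneg hsub fun _ _ _ => by positivity
    _ ≤ ∑ k ∈ Finset.range M, ((8 / 5 : ℝ) ^ (p ^ (k + 1) - 1))⁻¹ :=
        Finset.sum_image_le_of_nonneg fun _ _ => by positivity
    _ ≤ ∑ k ∈ Finset.range M, (5 / 8 : ℝ) ^ (2 ^ (k + 1) - 1) := by
        gcongr with k
        rw [← inv_pow, inv_div]
        refine pow_le_pow_of_le_one (by positivity) (by norm_num) ?_
        have := Nat.pow_le_pow_left hp (k + 1)
        omega
    _ ≤ 1 := sum_range_five_eighths_pow_two_pow_sub_one_le M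

theorem zero_notMem_partsPm1 {p : ℕ} (hp : 2 ≤ p) : 0 ∉ partsPm1 p := by
  rintro ⟨k, hk, h⟩
  have := Nat.le_self_pow (by omega : k ≠ 0) p
  omega

theorem card_altComp_le {p1 p2 : ℕ} (hp1 : 2 ≤ p1) (hp2 : 2 ≤ p2) (n : ℕ) :
    (Nat.card (altComp p1 p2 n) : ℝ) ≤ 2 * (8 / 5) ^ n := by
  have hbound {p q : ℕ} (hp : 2 ≤ p) (hq : 2 ≤ q) :
      ((altCompositions (partsPm1 p) (partsPm1 q) n).ncard : ℝ) ≤ (8 / 5) ^ n :=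
    ncard_altCompositions_le (by norm_num) (zero_notMem_partsPm1 hp) (zero_notMem_partsPm1 hq)
      (sum_inv_pow_le_one_of_subset_partsPm1 hp) (sum_inv_pow_le_one_of_subset_partsPm1 hq) n
  rw [Nat.card_coe_set_eq, altComp_eq_union]
  calc _ ≤ ((altCompositions (partsPm1 p1) (partsPm1 p2) n).ncard : ℝ) +
        (altCompositions (partsPm1 p2) (partsPm1 p1) n).ncard := by
        exact_mod_cast Set.ncard_union_le _ _
    _ ≤ (8 / 5) ^ n + (8 / 5) ^ n := add_le_add (hbound hp1 hp2) (hbound hp2 hp1)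
    _ = 2 * (8 / 5) ^ n := by ring

theorem two_mul_pow_le_pow_succ {k : ℕ} (hk : 1 ≤ k) :
    2 * (8 / 5 : ℝ) ^ k ≤ (9 / 5) ^ (k + 1) := by
  have h : (9 / 8 : ℝ) ≤ (9 / 8) ^ k := le_self_pow₀ (by norm_num) (by omega)
  calc 2 * (8 / 5 : ℝ) ^ k ≤ 9 / 5 * (9 / 8) ^ k * (8 / 5) ^ k := by
        gcongr
        linarith
    _ = (9 / 5) ^ (k + 1) := by
        rw [mul_assoc, ← mul_pow]
        ring

theorem exists_cubic_root_mem_Icc :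
    ∃ y ∈ Set.Icc (1 / 2 : ℝ) (5 / 9), y ^ 3 - 2 * y ^ 2 - y + 1 = 0 :=
  intermediate_value_Icc' (by norm_num) (by fun_prop) ⟨by norm_num, by norm_num⟩

theorem nine_fifths_le_inv_abs {x0 : ℝ} (hroot : x0 ^ 3 - 2 * x0 ^ 2 - x0 + 1 = 0)
    (hmin : ∀ y : ℝ, y ^ 3 - 2 * y ^ 2 - y + 1 = 0 → |x0| ≤ |y|) : 9 / 5 ≤ 1 / |x0| := by
  obtain ⟨y, ⟨hy1, hy2⟩, hy⟩ := exists_cubic_root_mem_Icc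
  have hx0 : x0 ≠ 0 := by
    rintro rfl
    norm_num at hroot
  have hx : |x0| ≤ 5 / 9 := (hmin y hy).trans (by rw [abs_of_pos (by linarith)]; exact hy2)
  rw [le_div_iff₀ (abs_pos.2 hx0)]
  linarith

/-- Lemma 3.1 (left inequality): `1 + Σ_{k=1}^m |P_{p1,p2}(k)| ≤ Σ_{k=1}^{m+1} B^k`,
where `B = 1/|x0|` and `x0` is the root of `x³ − 2x² − x + 1` of smallest absolute value. -/
theorem one_add_sum_card_altComp_le (p1 p2 : ℕ) (hp1 : 2 ≤ p1) (hp2 : 2 ≤ p2)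
    (x0 : ℝ)
    (hroot : x0 ^ 3 - 2 * x0 ^ 2 - x0 + 1 = 0)
    (hmin : ∀ y : ℝ, y ^ 3 - 2 * y ^ 2 - y + 1 = 0 → |x0| ≤ |y|) :
    ∀ m : ℕ,
      (1 : ℝ) + ∑ k ∈ Finset.Icc 1 m, (Nat.card (altComp p1 p2 k) : ℝ) ≤
        ∑ k ∈ Finset.Icc 1 (m + 1), (1 / |x0|) ^ k := by
  have hB := nine_fifths_le_inv_abs hroot hmin
  intro m
  induction m with
  | zero => simpa using hB.trans' (by norm_num)
  | succ m ih =>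
    rw [Finset.sum_Icc_succ_top (by omega), Finset.sum_Icc_succ_top (by omega)]
    have hterm := (card_altComp_le hp1 hp2 (m + 1)).trans
      ((two_mul_pow_le_pow_succ (by omega)).trans (pow_le_pow_left₀ (by norm_num) hB _))
    linarith
end
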